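/- For every integer m ≥ 2, the Misiurewicz polynomial G_{2,m,2}(c) is irreducible over ℚ. -/

import Mathlib

open Polynomial

noncomputable section

/-- `critPoly d i` is `f_{c,d}^i(0)` as a polynomial in the variable `c` over `ℤ`,
where `f_{c,d}(x) = x^d + c`. -/
def critPoly (d : ℕ) : ℕ → Polynomial ℤ
  | 0 => 0
  | i + 1 => critPoly d i ^ d + X

/-- The field of rational functions in `c` over `ℚ`, realized as the fraction field of `ℤ[c]`. -/
abbrev RF : Type := FractionRing (Polynomial ℤ)

/-- The natural inclusion `ℤ[c] → ℚ(c)`. -/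
def toRF (p : Polynomial ℤ) : RF := algebraMap (Polynomial ℤ) RF p

/-- `G_{d,0,n} = ∏_{k ∣ n} (f_{c,d}^k(0))^{μ(n/k)}` as a rational function. -/
def G0Rat (d n : ℕ) : RF :=
  ∏ k ∈ n.divisors, toRF (critPoly d k) ^ (ArithmeticFunction.moebius (n / k))

/-- `F_{d,m,n}` as a rational function. -/
def FRat (d m n : ℕ) : RF :=
  ∏ k ∈ n.divisors,
    ((toRF (critPoly d (m + k)) - toRF (critPoly d m)) /
      (toRF (critPoly d (m - 1 + k)) - toRF (critPoly d (m - 1)))) ^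
      (ArithmeticFunction.moebius (n / k))

/-- `G_{d,m,n}` (for `m ≥ 2`) as a rational function. -/
def GRat (d m n : ℕ) : RF :=
  if n ∣ m - 1 then FRat d m n / FRat d 1 n else FRat d m n

/-- `G : ℤ[c]` is the Misiurewicz polynomial `G_{d,m,n}` (for `m ≥ 2`). -/
def IsMisiurewicz (d m n : ℕ) (G : Polynomial ℤ) : Prop := toRF G = GRat d m n

/-- `G0 : ℤ[c]` is the polynomial `G_{d,0,n}`. -/
def IsG0 (d n : ℕ) (G0 : Polynomial ℤ) : Prop := toRF G0 = G0Rat d n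

/-!
For `d = n = 2` the quotient defining `F_{2,m,2}` collapses: if `a ↦ b ↦ c ↦ d` are consecutive
points of an orbit of `x ↦ x ^ 2 + t`, then `(d - b) (b - a) / ((c - a) (c - b)) = b - a + 1`, so
`F_{2,m,2} = f^m(0) - f^{m-1}(0) + 1`, which is `quadF (m - 1)`.
Modulo `2`, `f^{i+1}(0) ≡ f^i(0) + (c + 1) ^ 2 ^ i + 1`, hence `F_{2,m,2} ≡ (c + 1) ^ 2 ^ (m - 1)`,
while at `c = -1` the critical orbit is `0, -1, 0, -1, …`. For even `m` this gives
`G = F_{2,m,2}` with `G(-1) = 2`, and Eisenstein's criterion at `2` applies to `G(c - 1)`.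
For odd `m`, `G = F_{2,m,2} / (c + 1)` and `G(-1) = F_{2,m,2}'(-1) = 2`, so Eisenstein applies
again.
-/

lemma sq_add_orbit_ratio {K : Type*} [Field K] {t a b c d : K}
    (hb : b = a ^ 2 + t) (hc : c = b ^ 2 + t) (hd : d = c ^ 2 + t)
    (hca : c - a ≠ 0) (hcb : c - b ≠ 0) :
    ((c - b) / (b - a))⁻¹ * ((d - b) / (c - a)) = b - a + 1 := by
  have hcb' : c - b = (b - a) * (b + a) := by rw [hc, hb]; ring
  have hdb : d - b = (c - a) * ((b + a) * (b - a + 1)) := by rw [hd, hc, hb]; ring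
  rw [hcb'] at hcb ⊢
  have hba : b - a ≠ 0 := left_ne_zero_of_mul hcb
  have hba' : b + a ≠ 0 := right_ne_zero_of_mul hcb
  rw [hdb]
  field_simp

lemma sq_add_orbit_succ_of_charTwo {R : Type*} [CommRing R] [CharP R 2] (x : R) {g : ℕ → R}
    (h0 : g 0 = 0) (hstep : ∀ i, g (i + 1) = g i ^ 2 + x) (i : ℕ) :
    g (i + 1) = g i + (x + 1) ^ 2 ^ i + 1 := by
  induction i with
  | zero => rw [hstep, h0]; linear_combination -(CharTwo.two_eq_zero : (2 : R) = 0)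
  | succ i ih =>
    calc g (i + 2) = (g i + (x + 1) ^ 2 ^ i + 1) ^ 2 + x := by rw [hstep, ih]
      _ = g i ^ 2 + x + (x + 1) ^ 2 ^ (i + 1) + 1 := by
        rw [CharTwo.add_sq, CharTwo.add_sq, one_pow, ← pow_mul, ← pow_succ]; ring
      _ = g (i + 1) + (x + 1) ^ 2 ^ (i + 1) + 1 := by rw [hstep]

/-- Eisenstein's criterion at `p` for `H(X + a)`. -/
lemma irreducible_map_rat_of_eisenstein_shift (p : ℕ) [Fact p.Prime] (a : ℤ) {H : ℤ[X]}
    (hmon : H.Monic) (hdeg : 0 < H.natDegree)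
    (hmod : H.map (Int.castRingHom (ZMod p)) = (X - C (a : ZMod p)) ^ H.natDegree)
    (hval : ¬ (p : ℤ) ^ 2 ∣ H.eval a) :
    Irreducible (H.map (Int.castRingHom ℚ)) := by
  set P := RingHom.ker (Int.castRingHom (ZMod p))
  have hP : P = Ideal.span {(p : ℤ)} := ZMod.ker_intCastRingHom p
  have hK : (taylor a H).map (Int.castRingHom (ZMod p)) = X ^ H.natDegree := by
    rw [map_taylor, hmod, taylor_pow, map_sub, taylor_X, taylor_C, eq_intCast, add_sub_cancel_right]
  have hKmon : (taylor a H).Monic := by rwa [Monic, leadingCoeff_taylor]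
  have hEis : (taylor a H).IsEisensteinAt P := by
    refine hKmon.isEisensteinAt_of_mem_of_notMem (RingHom.ker_ne_top _) ?_ ?_
    · intro n hn
      rw [natDegree_taylor] at hn
      rw [RingHom.mem_ker, ← coeff_map, hK, coeff_X_pow, if_neg hn.ne]
    · rwa [taylor_coeff_zero, hP, Ideal.span_singleton_pow, Ideal.mem_span_singleton]
  have hirr : Irreducible (taylor a H) :=
    hEis.irreducible (RingHom.ker_isPrime _) hKmon.isPrimitive
      (by rwa [natDegree_taylor])
  exact (IsPrimitive.Int.irreducible_iff_irreducible_map_cast hmon.isPrimitive).1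
    ((MulEquiv.irreducible_iff (taylorEquiv a)).1 hirr)

lemma critPoly_succ (d i : ℕ) : critPoly d (i + 1) = critPoly d i ^ d + X := rfl

lemma critPoly_monic_and_natDegree {d : ℕ} (hd : 2 ≤ d) (i : ℕ) :
    (critPoly d (i + 1)).Monic ∧ (critPoly d (i + 1)).natDegree = d ^ i := by
  induction i with
  | zero => simp [critPoly, zero_pow (by omega : d ≠ 0)]
  | succ i ih =>
    have hpow : (critPoly d (i + 1) ^ d).natDegree = d ^ (i + 1) := by
      rw [natDegree_pow, ih.2, pow_succ, mul_comm]
    have hX : degree (X : ℤ[X]) < (critPoly d (i + 1) ^ d).degree := by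
      rw [degree_X, degree_eq_natDegree (ih.1.pow d).ne_zero, hpow]
      exact_mod_cast Nat.one_lt_pow (by omega) (by omega)
    exact ⟨(ih.1.pow d).add_of_left hX,
      by rw [critPoly_succ, natDegree_add_eq_left_of_degree_lt hX, hpow]⟩

lemma critPoly_monic {d : ℕ} (hd : 2 ≤ d) (i : ℕ) : (critPoly d (i + 1)).Monic :=
  (critPoly_monic_and_natDegree hd i).1

lemma critPoly_natDegree {d : ℕ} (hd : 2 ≤ d) (i : ℕ) : (critPoly d (i + 1)).natDegree = d ^ i :=
  (critPoly_monic_and_natDegree hd i).2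

lemma critPoly_degree_strictMono {d : ℕ} (hd : 2 ≤ d) :
    StrictMono fun i => (critPoly d i).degree := by
  refine strictMono_nat_of_lt_succ fun i => ?_
  rw [degree_eq_natDegree (critPoly_monic hd i).ne_zero, critPoly_natDegree hd]
  cases i with
  | zero => simp [critPoly]
  | succ i =>
    rw [degree_eq_natDegree (critPoly_monic hd i).ne_zero, critPoly_natDegree hd]
    exact_mod_cast Nat.pow_lt_pow_right (by omega) (by omega)

lemma critPoly_injective {d : ℕ} (hd : 2 ≤ d) : Function.Injective (critPoly d) :=
  fun _ _ h => (critPoly_degree_strictMono hd).injective (congrArg degree h)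

lemma toRF_injective : Function.Injective toRF :=
  IsFractionRing.injective (Polynomial ℤ) RF

lemma toRF_mul (p q : ℤ[X]) : toRF (p * q) = toRF p * toRF q := map_mul _ p q

def quadF (m : ℕ) : ℤ[X] := critPoly 2 (m + 1) - critPoly 2 m + 1

lemma quadF_zero : quadF 0 = X + 1 := by simp [quadF, critPoly]

lemma FRat_two_succ_two (m : ℕ) : FRat 2 (m + 1) 2 = toRF (quadF m) := by
  have hsucc (i : ℕ) : toRF (critPoly 2 (i + 1)) = toRF (critPoly 2 i) ^ 2 + toRF X := by
    simp only [toRF, critPoly_succ, map_add, map_pow]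
  have hne {i j : ℕ} (h : i ≠ j) : toRF (critPoly 2 i) - toRF (critPoly 2 j) ≠ 0 :=
    sub_ne_zero.2 (toRF_injective.ne ((critPoly_injective le_rfl).ne h))
  rw [FRat, Nat.Prime.divisors Nat.prime_two, Finset.prod_insert (by decide),
    Finset.prod_singleton, ArithmeticFunction.moebius_apply_prime Nat.prime_two]
  simp only [Nat.add_sub_cancel, Nat.div_self two_pos,
    ArithmeticFunction.moebius_apply_one, zpow_neg_one, zpow_one]
  rw [sq_add_orbit_ratio (hsucc m) (hsucc (m + 1)) (hsucc (m + 2)) (hne (by omega))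
    (hne (by omega))]
  simp only [quadF, toRF, map_add, map_sub, map_one]

lemma critPoly_map_zmod_two_succ (i : ℕ) :
    (critPoly 2 (i + 1)).map (Int.castRingHom (ZMod 2)) =
      (critPoly 2 i).map (Int.castRingHom (ZMod 2)) + (X + 1) ^ 2 ^ i + 1 :=
  sq_add_orbit_succ_of_charTwo X (g := fun i => (critPoly 2 i).map (Int.castRingHom (ZMod 2)))
    (by simp [critPoly]) (fun _ => by simp [critPoly_succ]) i

lemma quadF_map_zmod_two (m : ℕ) :
    (quadF m).map (Int.castRingHom (ZMod 2)) = (X + 1) ^ 2 ^ m := by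
  rw [quadF, Polynomial.map_add, Polynomial.map_sub, Polynomial.map_one,
    critPoly_map_zmod_two_succ]
  linear_combination (CharTwo.two_eq_zero : (2 : (ZMod 2)[X]) = 0)

lemma quadF_monic_and_natDegree (m : ℕ) : (quadF m).Monic ∧ (quadF m).natDegree = 2 ^ m := by
  have hmon := critPoly_monic le_rfl m
  have hlt : (1 - critPoly 2 m).degree < (critPoly 2 (m + 1)).degree := by
    refine (degree_sub_le _ _).trans_lt
      (max_lt ?_ (critPoly_degree_strictMono le_rfl m.lt_succ_self))
    rw [degree_one, degree_eq_natDegree hmon.ne_zero, critPoly_natDegree le_rfl]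
    exact_mod_cast Nat.two_pow_pos m
  have hF : quadF m = critPoly 2 (m + 1) + (1 - critPoly 2 m) := by rw [quadF]; ring
  rw [hF, natDegree_add_eq_left_of_degree_lt hlt, critPoly_natDegree le_rfl]
  exact ⟨hmon.add_of_left hlt, rfl⟩

lemma critPoly_eval_neg_one (i : ℕ) : (critPoly 2 i).eval (-1) = if Even i then 0 else -1 := by
  induction i with
  | zero => simp [critPoly]
  | succ i ih =>
    rw [critPoly_succ, eval_add, eval_pow, eval_X, ih]
    by_cases h : Even i <;> simp [h, Nat.even_add_one]

lemma derivative_critPoly_eval_neg_one (i : ℕ) :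
    (derivative (critPoly 2 (i + 1))).eval (-1) = if Even i then 1 else -1 := by
  induction i with
  | zero => simp [critPoly]
  | succ i ih =>
    rw [critPoly_succ 2 (i + 1), derivative_add, derivative_X, derivative_pow, eval_add, eval_mul,
      eval_mul, eval_C, eval_pow, critPoly_eval_neg_one, eval_one, ih]
    by_cases h : Even i <;> simp [h, Nat.even_add_one]

lemma quadF_eval_neg_one (m : ℕ) : (quadF m).eval (-1) = if Even m then 0 else 2 := by
  rw [quadF, eval_add, eval_sub, eval_one, critPoly_eval_neg_one, critPoly_eval_neg_one]
  by_cases h : Even m <;> simp [h, Nat.even_add_one]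

lemma derivative_quadF_eval_neg_one (m : ℕ) :
    (derivative (quadF (m + 1))).eval (-1) = if Even m then -2 else 2 := by
  rw [quadF, derivative_add, derivative_sub, derivative_one, add_zero, eval_sub,
    derivative_critPoly_eval_neg_one, derivative_critPoly_eval_neg_one]
  by_cases h : Even m <;> simp [h, Nat.even_add_one]

lemma X_sub_C_neg_one_zmod_two : (X - C (((-1 : ℤ) : ZMod 2))) = X + 1 := by
  simp [CharTwo.sub_eq_add]

lemma irreducible_quadF_of_odd {m : ℕ} (hm : Odd m) :
    Irreducible ((quadF m).map (Int.castRingHom ℚ)) := by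
  obtain ⟨hmon, hdeg⟩ := quadF_monic_and_natDegree m
  refine irreducible_map_rat_of_eisenstein_shift 2 (-1) hmon (hdeg ▸ Nat.two_pow_pos m) ?_ ?_
  · rw [quadF_map_zmod_two, hdeg, X_sub_C_neg_one_zmod_two]
  · rw [quadF_eval_neg_one, if_neg (Nat.not_even_iff_odd.2 hm)]
    norm_num

lemma irreducible_of_mul_X_add_one_eq_quadF {m : ℕ} (hm : Odd m) {G : ℤ[X]}
    (hG : G * (X + 1) = quadF (m + 1)) :
    Irreducible (G.map (Int.castRingHom ℚ)) := by
  obtain ⟨hmon, hdeg⟩ := quadF_monic_and_natDegree (m + 1)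
  have hX1 : (X + 1 : ℤ[X]).Monic := monic_X_add_C 1
  have hGmon : G.Monic := hX1.of_mul_monic_right (hG ▸ hmon)
  have hGdeg : G.natDegree + 1 = 2 ^ (m + 1) := by
    rw [← hdeg, ← hG, hGmon.natDegree_mul hX1, ← C_1, natDegree_X_add_C]
  have hGmod : G.map (Int.castRingHom (ZMod 2)) = (X + 1) ^ G.natDegree := by
    have h := congrArg (Polynomial.map (Int.castRingHom (ZMod 2))) hG
    rw [quadF_map_zmod_two, ← hGdeg, pow_succ, Polynomial.map_mul, Polynomial.map_add, map_X,
      Polynomial.map_one] at h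
    exact mul_right_cancel₀ (X_add_C_ne_zero 1) h
  -- `G(-1)` is the derivative of `G * (X + 1)` at `-1`.
  have hGval : G.eval (-1) = 2 := by
    have h := congrArg (fun P => (derivative P).eval (-1)) hG
    simp only [derivative_mul, derivative_add, derivative_X, derivative_one, eval_add, eval_zero,
      eval_mul, eval_X, eval_one] at h
    rw [derivative_quadF_eval_neg_one, if_neg (Nat.not_even_iff_odd.2 hm)] at h
    linear_combination h
  refine irreducible_map_rat_of_eisenstein_shift 2 (-1) hGmon (by omega) ?_ ?_
  · rw [hGmod, X_sub_C_neg_one_zmod_two]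
  · rw [hGval]
    norm_num

/-- For every `m ≥ 2`, `G_{2,m,2}` is irreducible over `ℚ`. -/
theorem misiurewicz_irreducible_two_two (m : ℕ) (hm : 2 ≤ m)
    (G : Polynomial ℤ) (hG : IsMisiurewicz 2 m 2 G) :
    Irreducible (G.map (Int.castRingHom ℚ)) := by
  obtain ⟨k, rfl⟩ : ∃ k, m = k + 2 := ⟨m - 2, by omega⟩
  have hF1 : FRat 2 1 2 = toRF (X + 1) := by rw [← quadF_zero, ← FRat_two_succ_two]
  rw [IsMisiurewicz, GRat, FRat_two_succ_two, hF1] at hG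
  split_ifs at hG with hdvd
  · have hX1 : toRF (X + 1) ≠ 0 := (map_ne_zero_iff _ toRF_injective).2 (X_add_C_ne_zero 1)
    refine irreducible_of_mul_X_add_one_eq_quadF (m := k) ?_ (toRF_injective ?_)
    · rw [Nat.odd_iff]; omega
    · rw [toRF_mul, hG, div_mul_cancel₀ _ hX1]
  · refine toRF_injective hG ▸ irreducible_quadF_of_odd ?_
    rw [Nat.odd_iff]; omega
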